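/- Assume the workload is nondegenerate in the sense that max_{j1, j2 ∈ Fin k} ∑_l |w_{l,j1} − w_{l,j2}| > 0, and let ε_DP := (max_{j1,j2} ∑_l |w_{l,j1} − w_{l,j2}|)/b. Then for every α ∈ (0, 1/k], the exponentiated simplified bound satisfies B_cor(α) := max_{j1, j2 ∈ Fin k} (α ∑_j exp(−Δ_{j,j1}) + (1 − kα) exp(−Δ_{j1,j2}))^{-1} < exp(ε_DP). -/
import Mathlib


open Finset Real

noncomputable section

/-- Scaled ℓ1 column distance `Δ_{j,j'} := (∑_l |w_{l,j} − w_{l,j'}|)/b`. -/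
def Δcol {m k : ℕ} (W : Fin m → Fin k → ℝ) (b : ℝ) (j j' : Fin k) : ℝ :=
  (∑ l, |W l j - W l j'|) / b

/-- The exponentiated simplified bound `B_cor(α)`. -/
def Bcor {m k : ℕ} (W : Fin m → Fin k → ℝ) (b α : ℝ) : ℝ :=
  ⨆ j1 : Fin k, ⨆ j2 : Fin k,
    (α * (∑ j, Real.exp (-Δcol W b j j1)) + (1 - (k : ℝ) * α) * Real.exp (-Δcol W b j1 j2))⁻¹

/-- The DP parameter of the Laplace mechanism with scale `b` on workload `W`. -/
def εDP {m k : ℕ} (W : Fin m → Fin k → ℝ) (b : ℝ) : ℝ :=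
  ⨆ j1 : Fin k, ⨆ j2 : Fin k, Δcol W b j1 j2

lemma fin_ciSup_lt {n : ℕ} [NeZero n] {f : Fin n → ℝ} {a : ℝ}
    (h : ∀ i, f i < a) : (⨆ i, f i) < a := by
  obtain ⟨i, hi⟩ := Finite.exists_max f
  exact lt_of_le_of_lt (ciSup_le hi) (h i)

/-- For a nondegenerate workload, the simplified context-aware bound is strictly smaller
than the standard DP guarantee: `B_cor(α) < exp(ε_DP)` for all `α ∈ (0, 1/k]`. -/
theorem Bcor_lt_exp_epsDP
    (k m : ℕ) (hk : 0 < k) (hm : 0 < m)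
    (b : ℝ) (hb : 0 < b) (W : Fin m → Fin k → ℝ)
    (hW : 0 < ⨆ j1 : Fin k, ⨆ j2 : Fin k, ∑ l, |W l j1 - W l j2|)
    (α : ℝ) (hα : 0 < α) (hαk : α ≤ 1 / (k : ℝ)) :
    Bcor W b α < Real.exp (εDP W b) := by
  haveI : NeZero k := ⟨hk.ne'⟩
  set ε := εDP W b with hεdef
  -- all Δ bounded by ε
  have hΔle : ∀ j j' : Fin k, Δcol W b j j' ≤ ε := by
    intro j j'
    have h1 : Δcol W b j j' ≤ ⨆ j2, Δcol W b j j2 :=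
      le_ciSup (Finite.bddAbove_range _) j'
    exact h1.trans (le_ciSup (Finite.bddAbove_range fun j1 => ⨆ j2, Δcol W b j1 j2) j)
  -- ε > 0
  have hε : 0 < ε := by
    by_contra h
    push_neg at h
    have : ∃ j1 j2 : Fin k, 0 < ∑ l, |W l j1 - W l j2| := by
      by_contra hc
      push_neg at hc
      have : (⨆ j1 : Fin k, ⨆ j2 : Fin k, ∑ l, |W l j1 - W l j2|) ≤ 0 :=
        ciSup_le fun j1 => ciSup_le fun j2 => hc j1 j2
      linarith
    obtain ⟨j1, j2, hpos⟩ := this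
    have : 0 < Δcol W b j1 j2 := div_pos hpos hb
    linarith [hΔle j1 j2]
  have hΔ0 : ∀ j : Fin k, Δcol W b j j = 0 := by
    intro j; simp [Δcol]
  have hexp : Real.exp (-ε) < 1 := by
    rw [Real.exp_lt_one_iff]; linarith
  have hkα : (k : ℝ) * α ≤ 1 := by
    have hk' : (0:ℝ) < k := Nat.cast_pos.mpr hk
    rw [le_div_iff₀ hk'] at hαk
    linarith [hαk]
  apply fin_ciSup_lt
  intro j1
  apply fin_ciSup_lt
  intro j2
  set D := α * (∑ j, Real.exp (-Δcol W b j j1)) +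
    (1 - (k : ℝ) * α) * Real.exp (-Δcol W b j1 j2) with hD
  have hS : ((k:ℝ) - 1) * Real.exp (-ε) + 1 ≤ ∑ j, Real.exp (-Δcol W b j j1) := by
    have hsplit : ∑ j, Real.exp (-Δcol W b j j1) =
        (∑ j ∈ univ.erase j1, Real.exp (-Δcol W b j j1)) + Real.exp (-Δcol W b j1 j1) :=
      (Finset.sum_erase_add _ _ (mem_univ j1)).symm
    have h1 : ((univ.erase j1).card : ℝ) * Real.exp (-ε) ≤
        ∑ j ∈ univ.erase j1, Real.exp (-Δcol W b j j1) := by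
      have := Finset.card_nsmul_le_sum (univ.erase j1)
        (fun j => Real.exp (-Δcol W b j j1)) (Real.exp (-ε))
        (fun j _ => Real.exp_le_exp.mpr (by linarith [hΔle j j1]))
      simpa [nsmul_eq_mul] using this
    have hcard : ((univ.erase j1).card : ℝ) = (k:ℝ) - 1 := by
      rw [Finset.card_erase_of_mem (mem_univ j1)]
      simp [Nat.cast_sub hk]
    rw [hsplit, hΔ0 j1, neg_zero, Real.exp_zero]
    rw [hcard] at h1
    linarith
  have hE : Real.exp (-ε) ≤ Real.exp (-Δcol W b j1 j2) :=
    Real.exp_le_exp.mpr (by linarith [hΔle j1 j2])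
  have hDlb : Real.exp (-ε) < D := by
    have h2 : (1 - (k : ℝ) * α) * Real.exp (-ε) ≤
        (1 - (k : ℝ) * α) * Real.exp (-Δcol W b j1 j2) :=
      mul_le_mul_of_nonneg_left hE (by linarith)
    have h3 : α * (((k:ℝ) - 1) * Real.exp (-ε) + 1) ≤
        α * (∑ j, Real.exp (-Δcol W b j j1)) :=
      mul_le_mul_of_nonneg_left hS hα.le
    nlinarith [hexp, hα]
  have hinv : D⁻¹ < (Real.exp (-ε))⁻¹ :=
    inv_strictAnti₀ (Real.exp_pos _) hDlb
  rwa [Real.exp_neg, inv_inv] at hinv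

end
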